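/- For every x ∈ ℝ^N and every w ∈ ℝ^N with Σ_{k=1}^N w_k = 0 (i.e. w orthogonal to the constant vectors), one has ⟨w, Hess V(x) w⟩ ≥ (μ − 1) ‖w‖². -/

import Mathlib

open Real MeasureTheory Matrix Filter

noncomputable section

/-- The discrete Laplacian `K` as an `N × N` matrix:
`(Kx)_k = μ/(4 sin²(π/N)) (2 x_k − x_{k+1} − x_{k−1})` with periodic indices. -/
def Kdisc (μ : ℝ) (N : ℕ) : Matrix (Fin N) (Fin N) ℝ :=
  Matrix.of fun k l =>
    μ / (4 * Real.sin (Real.pi / N) ^ 2) *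
      ((if l = k then 2 else 0) - (if (l : ℕ) = ((k : ℕ) + 1) % N then 1 else 0)
        - (if (l : ℕ) = ((k : ℕ) + (N - 1)) % N then 1 else 0))

/-- The energy `V(x) = (1/4)Σ x_k⁴ + (1/2)⟨x,(K−I)x⟩ + N/4`. -/
def Venergy (μ : ℝ) (N : ℕ) (x : Fin N → ℝ) : ℝ :=
  (1 / 4) * ∑ k, x k ^ 4
    + (1 / 2) * ∑ k, x k * ((Kdisc μ N).mulVec x k - x k)
    + N / 4

/-- The `k`-th partial derivative `∂_k φ(x)`. -/
def pgrad (N : ℕ) (φ : (Fin N → ℝ) → ℝ) (x : Fin N → ℝ) (k : Fin N) : ℝ :=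
  fderiv ℝ φ x (Pi.single k 1)

/-- Squared Euclidean norm of the gradient `|∇φ(x)|²`. -/
def gradSq (N : ℕ) (φ : (Fin N → ℝ) → ℝ) (x : Fin N → ℝ) : ℝ :=
  ∑ k, pgrad N φ x k ^ 2

/-- The Laplacian `Δφ(x) = Σ_k ∂²_k φ(x)`. -/
def lapl (N : ℕ) (φ : (Fin N → ℝ) → ℝ) (x : Fin N → ℝ) : ℝ :=
  ∑ k, fderiv ℝ (fun y => pgrad N φ y k) x (Pi.single k 1)

/-- The Hessian quadratic form `⟨w, Hess φ(x) w⟩`. -/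
def hessQF (N : ℕ) (φ : (Fin N → ℝ) → ℝ) (x w : Fin N → ℝ) : ℝ :=
  fderiv ℝ (fun y => fderiv ℝ φ y w) x w

/-- The orthogonal projection `P` onto the span of `(1,…,1)`, as a matrix. -/
def Pmat (N : ℕ) : Matrix (Fin N) (Fin N) ℝ := Matrix.of fun _ _ => 1 / (N : ℝ)

/-- The unnormalised equilibrium density `e^{−V(x)/(hN)}`. -/
def dens (μ : ℝ) (N : ℕ) (h : ℝ) (x : Fin N → ℝ) : ℝ :=
  Real.exp (-(Venergy μ N x) / (h * N))

/-- The rescaled potential `f(x) = V(√N x)/(2N)` of the Witten Laplacian. -/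
def fWit (μ : ℝ) (N : ℕ) (x : Fin N → ℝ) : ℝ :=
  Venergy μ N (fun k => Real.sqrt N * x k) / (2 * N)

/-- The quasimode `χ(x) = (2/√(2πh)) ∫₀^{x̄} e^{−t²/(2h)} dt`. -/
def chiQ (N : ℕ) (h : ℝ) (x : Fin N → ℝ) : ℝ :=
  (2 / Real.sqrt (2 * Real.pi * h)) *
    ∫ t in (0:ℝ)..((1 / N) * ∑ j, x j), Real.exp (-t ^ 2 / (2 * h))

/-- The matrix `αP + K + βI`. -/
def Mαβ (μ α β : ℝ) (N : ℕ) : Matrix (Fin N) (Fin N) ℝ :=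
  α • Pmat N + Kdisc μ N + β • (1 : Matrix (Fin N) (Fin N) ℝ)

/-- The covariance matrix `Q = (αP + K + βI)⁻¹`. -/
def Qmat (μ α β : ℝ) (N : ℕ) : Matrix (Fin N) (Fin N) ℝ := (Mαβ μ α β N)⁻¹

/-- The generator `L_h φ = −hNΔφ + ∇V·∇φ`. -/
def Lop (μ : ℝ) (N : ℕ) (h : ℝ) (φ : (Fin N → ℝ) → ℝ) (x : Fin N → ℝ) : ℝ :=
  -(h * N) * lapl N φ x + ∑ k, pgrad N (Venergy μ N) x k * pgrad N φ x k

end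

/-!
Expanding `V` gives `⟨w, Hess V(x) w⟩ = 3 Σ x_k² w_k² + ⟨w, K w⟩ - ‖w‖²`, and summation by parts
turns `⟨w, K w⟩` into `μ / (4 sin²(π/N)) · Σ (w_{k+1} - w_k)²`. It remains to prove the discrete
Wirtinger inequality `Σ (w_{k+1} - w_k)² ≥ 4 sin²(π/N) ‖w‖²` for `Σ w_k = 0`. By Parseval on the
characters of `Fin N`, shifting by one multiplies the Fourier coefficient at `ψ` by `ψ(-1) - 1`,
whose squared modulus is at least `4 sin²(π/N)` as `ψ(1)` is an `N`-th root of unity `≠ 1`, unless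
`ψ` is trivial; the coefficient at the trivial character is `Σ w_k = 0`.
-/

section Hessian

variable {ι : Type*} [Fintype ι]

theorem Matrix.hasFDerivAt_mulVec (A : Matrix ι ι ℝ) (x : ι → ℝ) :
    HasFDerivAt (fun y => A *ᵥ y) (LinearMap.toContinuousLinearMap A.mulVecLin) x :=
  (LinearMap.toContinuousLinearMap A.mulVecLin).hasFDerivAt

@[fun_prop]
theorem Matrix.differentiable_mulVec (A : Matrix ι ι ℝ) :
    Differentiable ℝ (fun y : ι → ℝ => A *ᵥ y) :=
  fun x => (A.hasFDerivAt_mulVec x).differentiableAt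

@[simp]
theorem Matrix.fderiv_mulVec (A : Matrix ι ι ℝ) (x : ι → ℝ) :
    fderiv ℝ (fun y => A *ᵥ y) x = LinearMap.toContinuousLinearMap A.mulVecLin :=
  (A.hasFDerivAt_mulVec x).fderiv

theorem fderiv_Venergy_apply (μ : ℝ) (N : ℕ) (y w : Fin N → ℝ) :
    fderiv ℝ (Venergy μ N) y w = ∑ k, y k ^ 3 * w k
      + (1 / 2) * ∑ k, (w k * ((Kdisc μ N *ᵥ y) k - y k) + y k * ((Kdisc μ N *ᵥ w) k - w k)) := by
  unfold Venergy
  simp (disch := fun_prop) [fderiv_fun_add, fderiv_const_mul, fderiv_fun_sum, fderiv_fun_pow,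
    fderiv_fun_mul, fderiv_apply, fderiv_fun_sub]
  simp only [Finset.mul_sum, ← Finset.sum_add_distrib]
  exact Finset.sum_congr rfl fun k _ => by ring

theorem hessQF_Venergy (μ : ℝ) (N : ℕ) (x w : Fin N → ℝ) :
    hessQF N (Venergy μ N) x w
      = 3 * ∑ k, x k ^ 2 * w k ^ 2 + ∑ k, w k * ((Kdisc μ N *ᵥ w) k - w k) := by
  rw [hessQF, funext fun y => fderiv_Venergy_apply μ N y w]
  simp (disch := fun_prop) [fderiv_fun_add, fderiv_const_mul, fderiv_fun_sum, fderiv_fun_pow,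
    fderiv_fun_mul, fderiv_apply, fderiv_fun_sub]
  simp only [Finset.mul_sum, ← Finset.sum_add_distrib]
  exact Finset.sum_congr rfl fun k _ => by ring

end Hessian

section FiniteAbelianGroup

open ComplexConjugate

variable {α : Type*} [AddCommGroup α] [Fintype α]

theorem sum_mul_two_mul_sub_sub (u : α → ℝ) (g : α) :
    ∑ a, u a * (2 * u a - u (a + g) - u (a - g)) = ∑ a, (u (a + g) - u a) ^ 2 := by
  have hshift : ∑ a, u (a + g) ^ 2 = ∑ a, u a ^ 2 :=
    Fintype.sum_equiv (Equiv.addRight g) _ _ fun _ => rfl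
  have hback : ∑ a, u a * u (a - g) = ∑ a, u (a + g) * u a :=
    Fintype.sum_equiv (Equiv.subRight g) _ _ fun a => by simp
  rw [← sub_eq_zero, ← Finset.sum_sub_distrib]
  calc ∑ a, (u a * (2 * u a - u (a + g) - u (a - g)) - (u (a + g) - u a) ^ 2)
      = ∑ a, (u a ^ 2 - u (a + g) ^ 2) + ∑ a, (u (a + g) * u a - u a * u (a - g)) := by
        rw [← Finset.sum_add_distrib]
        exact Finset.sum_congr rfl fun a _ => by ring
    _ = 0 := by rw [Finset.sum_sub_distrib, Finset.sum_sub_distrib, hshift, hback]; ring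

namespace AddChar

theorem sum_norm_sq_sum_mul (u : α → ℂ) :
    ∑ ψ : AddChar α ℂ, ‖∑ a, u a * ψ a‖ ^ 2 = Fintype.card α * ∑ a, ‖u a‖ ^ 2 := by
  classical
  suffices h : ∑ ψ : AddChar α ℂ, ((‖∑ a, u a * ψ a‖ ^ 2 : ℝ) : ℂ)
      = Fintype.card α * ∑ a, ((‖u a‖ ^ 2 : ℝ) : ℂ) by exact_mod_cast h
  push_cast
  simp_rw [← Complex.mul_conj', map_sum, map_mul, ← map_neg_eq_conj, Finset.sum_mul_sum]
  rw [Finset.sum_comm]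
  calc ∑ a, ∑ ψ : AddChar α ℂ, ∑ b, u a * ψ a * (conj (u b) * ψ (-b))
      = ∑ a, ∑ b, u a * conj (u b) * ∑ ψ : AddChar α ℂ, ψ (a - b) := by
        refine Finset.sum_congr rfl fun a _ => ?_
        rw [Finset.sum_comm]
        refine Finset.sum_congr rfl fun b _ => ?_
        rw [Finset.mul_sum]
        refine Finset.sum_congr rfl fun ψ _ => ?_
        rw [sub_eq_add_neg, map_add_eq_mul]
        ring
    _ = Fintype.card α * ∑ a, u a * conj (u a) := by
        simp [sum_apply_eq_ite, sub_eq_zero, Finset.mul_sum, mul_comm]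

theorem sum_comp_add_mul (u : α → ℂ) (g : α) (ψ : AddChar α ℂ) :
    ∑ a, u (a + g) * ψ a = ψ (-g) * ∑ a, u a * ψ a := by
  rw [Finset.mul_sum]
  refine Fintype.sum_equiv (Equiv.addRight g) _ _ fun a => ?_
  simp [← map_add_eq_mul, mul_left_comm]

end AddChar

theorem mul_sum_sq_le_sum_sq_sub_shift (g : α) {c : ℝ}
    (hc : ∀ ψ : AddChar α ℂ, ψ ≠ 0 → c ≤ ‖ψ g - 1‖ ^ 2) (u : α → ℝ) (hu : ∑ a, u a = 0) :
    c * ∑ a, u a ^ 2 ≤ ∑ a, (u (a + g) - u a) ^ 2 := by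
  set û : AddChar α ℂ → ℂ := fun ψ => ∑ a, (u a : ℂ) * ψ a
  have hû₀ : û 0 = 0 := by simp [û, ← Complex.ofReal_sum, hu]
  have hdiff (ψ : AddChar α ℂ) :
      ∑ a, ((u (a + g) - u a : ℝ) : ℂ) * ψ a = (ψ (-g) - 1) * û ψ := by
    simp only [Complex.ofReal_sub, sub_mul, Finset.sum_sub_distrib,
      AddChar.sum_comp_add_mul (fun a => (u a : ℂ))]
    ring
  have hterm (ψ : AddChar α ℂ) : c * ‖û ψ‖ ^ 2 ≤ ‖ψ (-g) - 1‖ ^ 2 * ‖û ψ‖ ^ 2 := by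
    rcases eq_or_ne ψ 0 with rfl | hψ
    · simp [hû₀]
    · have hcψ := hc (-ψ) (neg_ne_zero.mpr hψ)
      rw [AddChar.neg_apply] at hcψ
      gcongr
  have hcard : (0 : ℝ) < Fintype.card α := by exact_mod_cast Fintype.card_pos
  have parseval (v : α → ℝ) : ∑ ψ : AddChar α ℂ, ‖∑ a, (v a : ℂ) * ψ a‖ ^ 2
      = Fintype.card α * ∑ a, v a ^ 2 := by
    simpa only [Complex.norm_real, Real.norm_eq_abs, sq_abs] using
      AddChar.sum_norm_sq_sum_mul (fun a => (v a : ℂ))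
  refine le_of_mul_le_mul_left ?_ hcard
  calc (Fintype.card α : ℝ) * (c * ∑ a, u a ^ 2) = ∑ ψ : AddChar α ℂ, c * ‖û ψ‖ ^ 2 := by
        rw [← Finset.mul_sum, parseval u]; ring
    _ ≤ ∑ ψ : AddChar α ℂ, ‖ψ (-g) - 1‖ ^ 2 * ‖û ψ‖ ^ 2 := Finset.sum_le_sum fun ψ _ => hterm ψ
    _ = _ := by simp only [← norm_mul, ← mul_pow, ← hdiff, parseval]

end FiniteAbelianGroup

theorem Fin.val_add_one_eq_mod {N : ℕ} [NeZero N] (k : Fin N) : (k + 1).val = (k.val + 1) % N := by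
  rw [Fin.val_add, Fin.val_one', Nat.add_mod_mod]

theorem Fin.val_sub_one_eq_mod {N : ℕ} [NeZero N] (k : Fin N) :
    (k - 1).val = (k.val + (N - 1)) % N := by
  rw [Fin.sub_def]
  rcases Nat.lt_or_ge 1 N with h | h
  · simp only [Fin.val_one', Nat.mod_eq_of_lt h, Nat.add_comm]
  · have : N = 1 := by have := N.pos_of_neZero; omega
    subst this; simp

theorem Kdisc_mulVec_apply {N : ℕ} [NeZero N] (μ : ℝ) (w : Fin N → ℝ) (k : Fin N) :
    (Kdisc μ N *ᵥ w) k = μ / (4 * sin (π / N) ^ 2) * (2 * w k - w (k + 1) - w (k - 1)) := by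
  simp only [mulVec, dotProduct, Kdisc, of_apply, ← Fin.val_add_one_eq_mod,
    ← Fin.val_sub_one_eq_mod, ← Fin.ext_iff, mul_assoc, ← Finset.mul_sum, sub_mul, ite_mul,
    zero_mul, one_mul, Finset.sum_sub_distrib, Finset.sum_ite_eq']
  simp

theorem Real.sin_le_sin_of_le_of_le_pi_sub {a x : ℝ} (ha : 0 ≤ a) (hax : a ≤ x)
    (hxa : x ≤ π - a) : sin a ≤ sin x := by
  rcases le_total x (π / 2) with hx | hx
  · exact sin_le_sin_of_le_of_le_pi_div_two (by linarith) hx hax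
  · rw [← sin_pi_sub x]
    exact sin_le_sin_of_le_of_le_pi_div_two (by linarith) (by linarith) (by linarith)

theorem Real.sin_sq_pi_div_le_sin_sq_pi_mul_div {N i : ℕ} (hi : 0 < i) (hiN : i < N) :
    sin (π / N) ^ 2 ≤ sin (π * i / N) ^ 2 := by
  have hN : (0 : ℝ) < N := by exact_mod_cast hi.trans hiN
  have hi' : (1 : ℝ) ≤ i := by exact_mod_cast hi
  have hiN' : (i : ℝ) + 1 ≤ N := by exact_mod_cast hiN
  have h0 : 0 ≤ sin (π / N) := sin_nonneg_of_nonneg_of_le_pi (by positivity) <|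
    div_le_self pi_pos.le (by linarith)
  have hle : sin (π / N) ≤ sin (π * i / N) := by
    refine sin_le_sin_of_le_of_le_pi_sub (by positivity) ?_ ?_
    · rw [div_le_div_iff_of_pos_right hN]; nlinarith [pi_pos]
    · rw [le_sub_iff_add_le, ← add_div, div_le_iff₀ hN]
      nlinarith [pi_pos]
  exact pow_le_pow_left₀ h0 hle 2

theorem four_sin_sq_pi_div_le_norm_sub_one_sq {N : ℕ} {ζ : ℂ} (hζ : ζ ^ N = 1) (hζ1 : ζ ≠ 1) :
    4 * sin (π / N) ^ 2 ≤ ‖ζ - 1‖ ^ 2 := by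
  rcases Nat.eq_zero_or_pos N with rfl | hN
  · simp
  have : NeZero N := ⟨hN.ne'⟩
  obtain ⟨i, hiN, rfl⟩ := (Complex.isPrimitiveRoot_exp N hN.ne').eq_pow_of_pow_eq_one hζ
  have hi : 0 < i := Nat.pos_of_ne_zero (by rintro rfl; simp at hζ1)
  have hexp : Complex.exp (2 * π * Complex.I / N) ^ i
      = Complex.exp (Complex.I * ↑(2 * π * i / N)) := by
    rw [← Complex.exp_nat_mul]; push_cast; ring_nf
  rw [hexp, Complex.norm_exp_I_mul_ofReal_sub_one, Real.norm_eq_abs, sq_abs,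
    show 2 * π * i / N / 2 = π * i / N by ring]
  nlinarith [Real.sin_sq_pi_div_le_sin_sq_pi_mul_div hi hiN]

theorem Fin.val_nsmul_one {N : ℕ} [NeZero N] (n : ℕ) : (n • (1 : Fin N)).val = n % N := by
  induction n with
  | zero => simp
  | succ n ih => rw [succ_nsmul, Fin.val_add, ih, Fin.val_one', Nat.add_mod_mod, Nat.mod_add_mod]

theorem AddChar.four_sin_sq_pi_div_le_norm_apply_one_sub_one_sq {N : ℕ} [NeZero N]
    {ψ : AddChar (Fin N) ℂ} (hψ : ψ ≠ 0) : 4 * sin (π / N) ^ 2 ≤ ‖ψ 1 - 1‖ ^ 2 := by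
  have hpow (n : ℕ) : ψ 1 ^ n = ψ ⟨n % N, Nat.mod_lt n N.pos_of_neZero⟩ := by
    rw [← ψ.map_nsmul_eq_pow]; exact congrArg ψ (Fin.ext (Fin.val_nsmul_one n))
  refine four_sin_sq_pi_div_le_norm_sub_one_sq (N := N) ?_ fun h1 => hψ ?_
  · simp [hpow]
  · ext x
    simpa [Nat.mod_eq_of_lt x.isLt, h1] using (hpow x).symm

/-- uniform convexity of `Hess V` in the directions orthogonal to
the constant vectors: `⟨w, Hess V(x) w⟩ ≥ (μ−1)‖w‖²` whenever `Σ_k w_k = 0`. -/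
theorem hessV_convex_orthogonal (μ : ℝ) (hμ : 1 < μ) (N : ℕ) (hN : 2 ≤ N)
    (x w : Fin N → ℝ) (hw : ∑ k, w k = 0) :
    (μ - 1) * ∑ k, w k ^ 2 ≤ hessQF N (Venergy μ N) x w := by
  have : NeZero N := ⟨by omega⟩
  set s := 4 * sin (π / N) ^ 2
  have hs : 0 < s := by
    have : 0 < sin (π / N) := sin_pos_of_pos_of_lt_pi (by positivity)
      (div_lt_self pi_pos (by exact_mod_cast hN))
    positivity
  have hK : ∑ k, w k * (Kdisc μ N *ᵥ w) k = μ / s * ∑ k, (w (k + 1) - w k) ^ 2 := by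
    simp_rw [Kdisc_mulVec_apply, mul_left_comm (w _), ← Finset.mul_sum, sum_mul_two_mul_sub_sub]
    rfl
  have hwirt : s * ∑ k, w k ^ 2 ≤ ∑ k, (w (k + 1) - w k) ^ 2 :=
    mul_sum_sq_le_sum_sq_sub_shift 1
      (fun _ hψ => AddChar.four_sin_sq_pi_div_le_norm_apply_one_sub_one_sq hψ) w hw
  calc (μ - 1) * ∑ k, w k ^ 2 = μ / s * (s * ∑ k, w k ^ 2) - ∑ k, w k ^ 2 := by
        field_simp
    _ ≤ μ / s * ∑ k, (w (k + 1) - w k) ^ 2 - ∑ k, w k ^ 2 := by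
        have : 0 ≤ μ / s := div_nonneg (by linarith) hs.le
        gcongr
    _ ≤ 3 * ∑ k, x k ^ 2 * w k ^ 2 + ∑ k, w k * ((Kdisc μ N *ᵥ w) k - w k) := by
        simp only [mul_sub, Finset.sum_sub_distrib, hK, ← sq]
        linarith [show 0 ≤ 3 * ∑ k, x k ^ 2 * w k ^ 2 by positivity]
    _ = hessQF N (Venergy μ N) x w := (hessQF_Venergy μ N x w).symm
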